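/- arXiv:2410.01659 — 5 statements merged into one kernel-verified Lean document; each statement's English description precedes it below -/
import Mathlib

section
/- Let a, b be natural numbers with a ≤ b. A natural number n belongs to the additive closure of the integer interval Set.Icc a b (i.e., n is a sum of a finite multiset of elements of [a,b], possibly empty) if and only if there exists a natural number k such that k*a ≤ n and n ≤ k*b. -/
/-!
The sums of `k` elements of `[a, b]` are exactly the numbers in `[k * a, k * b]`: one inclusion is
monotonicity of addition, and for the other a number in `[(k + 1) * a, (k + 1) * b]` splits off one
summand in `[a, b]` leaving a remainder in `[k * a, k * b]`. These intervals are closed under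
addition and contain `[a, b]`, so their union is the additive closure.
-/

open Set
open scoped Pointwise

namespace Nat

theorem Icc_add_Icc {a b c d : ℕ} (hab : a ≤ b) (hcd : c ≤ d) :
    Icc a b + Icc c d = Icc (a + c) (b + d) := by
  refine (Icc_add_Icc_subset a b c d).antisymm fun n ⟨hn₁, hn₂⟩ => ?_
  -- Take the largest admissible first summand; the remainder then lands in `[c, d]`.
  exact ⟨min b (n - c), ⟨by omega, min_le_left _ _⟩, n - min b (n - c), ⟨by omega, by omega⟩,
    Nat.add_sub_of_le (by omega)⟩

theorem Icc_succ_mul_subset_Icc_mul_add_Icc (a b k : ℕ) :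
    Icc ((k + 1) * a) ((k + 1) * b) ⊆ Icc (k * a) (k * b) + Icc a b := by
  rintro n hn
  have hab : a ≤ b := Nat.le_of_mul_le_mul_left (hn.1.trans hn.2) k.succ_pos
  rwa [Icc_add_Icc (Nat.mul_le_mul_left k hab) hab, ← Nat.succ_mul, ← Nat.succ_mul]

theorem Icc_mul_subset_addClosure_Icc (a b k : ℕ) :
    Icc (k * a) (k * b) ⊆ AddSubmonoid.closure (Icc a b) := by
  induction k with
  | zero => simp
  | succ k ih =>
    rintro _ hn
    obtain ⟨m, hm, x, hx, rfl⟩ := Icc_succ_mul_subset_Icc_mul_add_Icc a b k hn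
    exact add_mem (ih hm) (AddSubmonoid.subset_closure hx)

def iUnionIccMul (a b : ℕ) : AddSubmonoid ℕ where
  carrier := {n | ∃ k : ℕ, k * a ≤ n ∧ n ≤ k * b}
  zero_mem' := ⟨0, by simp⟩
  add_mem' := by
    rintro _ _ ⟨k, hx⟩ ⟨l, hy⟩
    refine ⟨k + l, ?_⟩
    rw [add_mul, add_mul]
    exact Icc_add_Icc_subset _ _ _ _ (add_mem_add hx hy)

@[simp]
theorem mem_iUnionIccMul {a b n : ℕ} : n ∈ iUnionIccMul a b ↔ ∃ k : ℕ, k * a ≤ n ∧ n ≤ k * b :=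
  Iff.rfl

theorem addClosure_Icc_eq_iUnionIccMul (a b : ℕ) :
    AddSubmonoid.closure (Icc a b) = iUnionIccMul a b := by
  refine le_antisymm
    (AddSubmonoid.closure_le.2 fun x hx => mem_iUnionIccMul.2 ⟨1, by simpa using hx⟩) ?_
  intro n hn
  obtain ⟨k, hk⟩ := mem_iUnionIccMul.1 hn
  exact Icc_mul_subset_addClosure_Icc a b k hk

end Nat

theorem mem_addClosure_Icc_iff_general (a b : ℕ) (n : ℕ) :
    n ∈ AddSubmonoid.closure (Set.Icc a b) ↔ ∃ k : ℕ, k * a ≤ n ∧ n ≤ k * b := by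
  rw [Nat.addClosure_Icc_eq_iUnionIccMul, Nat.mem_iUnionIccMul]

theorem mem_addClosure_Icc_iff (a b : ℕ) (hab : a ≤ b) (n : ℕ) :
    n ∈ AddSubmonoid.closure (Set.Icc a b) ↔ ∃ k : ℕ, k * a ≤ n ∧ n ≤ k * b :=
  mem_addClosure_Icc_iff_general a b n
end

section
/- Let a, b be natural numbers with a ≤ b. A natural number n belongs to the additive closure of the integer interval Set.Icc a b if and only if n = 0, or there exist y₁, y₂, y₃ ∈ Set.Icc a b and natural numbers z₁, z₂ such that y₁ divides z₁, y₂ divides z₂, and n = z₁ + z₂ + y₃. -/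
/-! A sum of `k` elements of `[a, b]` lies in `[k a, k b]`. Conversely, for `k ≥ 1` every number of
`[k a, k b]` is `c b + d a + y` with `y ∈ [a, b]`: split off one summand `b` if the rest still
reaches `(k - 1) a`, and one summand `a` otherwise. The multiples `c b` and `d a` are the `z₁, z₂`. -/

theorem exists_nsmul_le_le_nsmul_of_mem_addClosure_Icc {M : Type*} [AddCommMonoid M]
    [PartialOrder M] [IsOrderedAddMonoid M] {a b x : M}
    (hx : x ∈ AddSubmonoid.closure (Set.Icc a b)) : ∃ k : ℕ, k • a ≤ x ∧ x ≤ k • b := by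
  induction hx using AddSubmonoid.closure_induction with
  | mem x hx => exact ⟨1, by simpa using hx.1, by simpa using hx.2⟩
  | zero => exact ⟨0, by simp, by simp⟩
  | add x y _ _ hx hy =>
    obtain ⟨k, hkx, hxk⟩ := hx
    obtain ⟨l, hly, hyl⟩ := hy
    exact ⟨k + l, add_nsmul a k l ▸ add_le_add hkx hly, add_nsmul b k l ▸ add_le_add hxk hyl⟩

theorem Nat.exists_eq_mul_add_mul_add_of_succ_mul_le {a b k n : ℕ} (hlo : (k + 1) * a ≤ n)
    (hhi : n ≤ (k + 1) * b) : ∃ c d : ℕ, ∃ y ∈ Set.Icc a b, n = c * b + d * a + y := by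
  induction k generalizing n with
  | zero => exact ⟨0, 0, n, ⟨by simpa using hlo, by simpa using hhi⟩, by simp⟩
  | succ k ih =>
    have hab : a ≤ b := Nat.le_of_mul_le_mul_left (hlo.trans hhi) k.succ.succ_pos
    have hka : k * a ≤ k * b := Nat.mul_le_mul_left k hab
    simp only [add_mul, one_mul] at hlo hhi ih
    by_cases hb : k * a + a + b ≤ n
    · obtain ⟨m, rfl⟩ := Nat.exists_eq_add_of_le' (le_of_add_le_right hb)
      obtain ⟨c, d, y, hy, rfl⟩ := ih (n := m) (by omega) (by omega)
      exact ⟨c + 1, d, y, hy, by ring⟩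
    · obtain ⟨m, rfl⟩ := Nat.exists_eq_add_of_le' (le_of_add_le_right hlo)
      obtain ⟨c, d, y, hy, rfl⟩ := ih (n := m) (by omega) (by omega)
      exact ⟨c, d + 1, y, hy, by ring⟩

theorem mem_addClosure_of_dvd {S : Set ℕ} {y z : ℕ} (hy : y ∈ S) (hyz : y ∣ z) :
    z ∈ AddSubmonoid.closure S := by
  obtain ⟨c, rfl⟩ := hyz
  simpa [mul_comm] using nsmul_mem (AddSubmonoid.subset_closure hy) c

theorem mem_addClosure_Icc_iff_divisibility_general (a b : ℕ) (n : ℕ) :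
    n ∈ AddSubmonoid.closure (Set.Icc a b) ↔
      n = 0 ∨ ∃ y₁ ∈ Set.Icc a b, ∃ y₂ ∈ Set.Icc a b, ∃ y₃ ∈ Set.Icc a b,
        ∃ z₁ z₂ : ℕ, y₁ ∣ z₁ ∧ y₂ ∣ z₂ ∧ n = z₁ + z₂ + y₃ := by
  constructor
  · intro hn
    obtain ⟨k, hlo, hhi⟩ := exists_nsmul_le_le_nsmul_of_mem_addClosure_Icc hn
    rw [smul_eq_mul] at hlo hhi
    rcases k with _ | k
    · exact Or.inl (by simpa using hhi)
    obtain ⟨c, d, y, hy, rfl⟩ := Nat.exists_eq_mul_add_mul_add_of_succ_mul_le hlo hhi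
    have hab : a ≤ b := hy.1.trans hy.2
    exact Or.inr ⟨b, ⟨hab, le_rfl⟩, a, ⟨le_rfl, hab⟩, y, hy, c * b, d * a,
      dvd_mul_left b c, dvd_mul_left a d, rfl⟩
  · rintro (rfl | ⟨y₁, hy₁, y₂, hy₂, y₃, hy₃, z₁, z₂, h₁, h₂, rfl⟩)
    · exact zero_mem _
    · exact add_mem (add_mem (mem_addClosure_of_dvd hy₁ h₁) (mem_addClosure_of_dvd hy₂ h₂))
        (AddSubmonoid.subset_closure hy₃)

theorem mem_addClosure_Icc_iff_divisibility (a b : ℕ) (hab : a ≤ b) (n : ℕ) :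
    n ∈ AddSubmonoid.closure (Set.Icc a b) ↔
      n = 0 ∨ ∃ y₁ ∈ Set.Icc a b, ∃ y₂ ∈ Set.Icc a b, ∃ y₃ ∈ Set.Icc a b,
        ∃ z₁ z₂ : ℕ, y₁ ∣ z₁ ∧ y₂ ∣ z₂ ∧ n = z₁ + z₂ + y₃ :=
  mem_addClosure_Icc_iff_divisibility_general a b n
end

section
/- Let a, b, n be natural numbers with a ≤ b. There exists a natural number k ≥ 1 with k*a ≤ n and n ≤ k*b if and only if there exist y₁, y₂, y₃ ∈ Set.Icc a b and natural numbers z₁, z₂ such that y₁ divides z₁, y₂ divides z₂, and n = z₁ + z₂ + y₃. -/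
theorem exists_k_iff_divisibility (a b n : ℕ) (hab : a ≤ b) :
    (∃ k : ℕ, 1 ≤ k ∧ k * a ≤ n ∧ n ≤ k * b) ↔
      ∃ y₁ ∈ Set.Icc a b, ∃ y₂ ∈ Set.Icc a b, ∃ y₃ ∈ Set.Icc a b,
        ∃ z₁ z₂ : ℕ, y₁ ∣ z₁ ∧ y₂ ∣ z₂ ∧ n = z₁ + z₂ + y₃ := by
  constructor
  · rintro ⟨k, hk, hka, hkb⟩
    obtain ⟨d, rfl⟩ : ∃ d, b = a + d := ⟨b - a, by omega⟩
    set r := n - k * a with hr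
    have hrd : r ≤ k * d := by
      have : k * (a + d) = k * a + k * d := by ring
      omega
    set q := r / d with hq
    set s := r % d with hs
    have hdm : d * q + s = r := Nat.div_add_mod r d
    have hsd : s ≤ d := by
      rcases Nat.eq_zero_or_pos d with h | h
      · subst h; simp [hs] at *; omega
      · exact le_of_lt (Nat.mod_lt _ h)
    have hqk : q ≤ k := by
      rcases Nat.eq_zero_or_pos d with h | h
      · subst h; simp [hq]
      · by_contra hc
        push_neg at hc
        have : k * d < q * d := (Nat.mul_lt_mul_right h).mpr hc
        nlinarith
    rcases eq_or_lt_of_le hqk with heq | hlt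
    · -- q = k, then s = 0 and n = k * (a + d)
      have hs0 : s = 0 := by nlinarith
      have hn : n = k * (a + d) := by
        have h1 : n = k * a + r := by omega
        rw [heq] at hdm
        nlinarith
      obtain ⟨k'', hk''⟩ : ∃ k'', k = k'' + 1 := ⟨k - 1, by omega⟩
      refine ⟨a + d, by simp, a + d, by simp, a + d, by simp,
        k'' * (a + d), 0, ⟨k'', by ring⟩, ⟨0, by ring⟩, ?_⟩
      rw [hn, hk'']; ring
    · -- q < k
      obtain ⟨k', hk'⟩ : ∃ k', k = q + k' + 1 := ⟨k - q - 1, by omega⟩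
      refine ⟨a + d, by simp, a, ⟨le_refl a, by omega⟩, a + s, ⟨by omega, by omega⟩,
        q * (a + d), k' * a, ⟨q, by ring⟩, ⟨k', by ring⟩, ?_⟩
      have hn : n = k * a + r := by omega
      rw [hn, hk', ← hdm]; ring
  · rintro ⟨y₁, hy₁, y₂, hy₂, y₃, hy₃, z₁, z₂, ⟨m₁, rfl⟩, ⟨m₂, rfl⟩, rfl⟩
    refine ⟨m₁ + m₂ + 1, by omega, ?_, ?_⟩
    · have h1 := Nat.mul_le_mul_right m₁ hy₁.1
      have h2 := Nat.mul_le_mul_right m₂ hy₂.1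
      have h3 := hy₃.1
      nlinarith
    · have h1 := Nat.mul_le_mul_right m₁ hy₁.2
      have h2 := Nat.mul_le_mul_right m₂ hy₂.2
      have h3 := hy₃.2
      nlinarith
end

section
/- Let m be a natural number and let a, b : Fin (m+1) → ℕ satisfy a j ≤ b j for all j. Then the set { n : ℕ | ∃ x : Fin (m+1) → ℕ, ∃ k : Fin m → ℕ, n = ∑ j, x j ∧ a 0 ≤ x 0 ∧ x 0 ≤ b 0 ∧ ∀ j : Fin m, (k j) * a (j.succ) ≤ x (j.succ) ∧ x (j.succ) ≤ (k j) * b (j.succ) } equals the set { n : ℕ | ∃ x : Fin (m+1) → ℕ, n = ∑ j, x j ∧ a 0 ≤ x 0 ∧ x 0 ≤ b 0 ∧ ∀ j : Fin m, ( x (j.succ) = 0 ∨ ∃ y₁ y₂ y₃ ∈ Set.Icc (a (j.succ)) (b (j.succ)), ∃ z₁ z₂ : ℕ, y₁ ∣ z₁ ∧ y₂ ∣ z₂ ∧ x (j.succ) = z₁ + z₂ + y₃ ) }. -/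
lemma lpsl_decomp (A B : ℕ) (hAB : A ≤ B) :
    ∀ k x : ℕ, 1 ≤ k → k * A ≤ x → x ≤ k * B →
      ∃ q r t, A ≤ t ∧ t ≤ B ∧ x = q * B + r * A + t := by
  intro k
  induction k with
  | zero => intro x h; omega
  | succ k ih =>
    intro x _ h1 h2
    rcases Nat.eq_zero_or_pos k with hk | hk
    · subst hk
      exact ⟨0, 0, x, by simpa using h1, by simpa using h2, by ring⟩
    · by_cases hbig : k * A + B ≤ x
      · obtain ⟨q, r, t, ht1, ht2, ht3⟩ := ih (x - B) hk (by omega)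
          (by have e : (k+1)*B = k*B + B := by ring
              omega)
        refine ⟨q + 1, r, t, ht1, ht2, ?_⟩
        have e : (q+1)*B = q*B + B := by ring
        have e1 : (k+1)*A = k*A + A := by ring
        have e2 : (k+1)*B = k*B + B := by ring
        omega
      · obtain ⟨q, r, t, ht1, ht2, ht3⟩ := ih (x - A) hk
          (by have e : (k+1)*A = k*A + A := by ring
              omega)
          (by have h3 : k * A + B ≤ k * B + A := by nlinarith
              have e : (k+1)*B = k*B + B := by ring
              omega)
        refine ⟨q, r + 1, t, ht1, ht2, ?_⟩
        have e : (r+1)*A = r*A + A := by ring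
        have e1 : (k+1)*A = k*A + A := by ring
        have e2 : (k+1)*B = k*B + B := by ring
        have hAx : A ≤ x := by omega
        omega


theorem lpsl_section_eq_divisibility (m : ℕ) (a b : Fin (m + 1) → ℕ)
    (hab : ∀ j, a j ≤ b j) :
    { n : ℕ | ∃ x : Fin (m + 1) → ℕ, ∃ k : Fin m → ℕ,
        n = ∑ j, x j ∧ a 0 ≤ x 0 ∧ x 0 ≤ b 0 ∧
        ∀ j : Fin m, (k j) * a j.succ ≤ x j.succ ∧ x j.succ ≤ (k j) * b j.succ } =
    { n : ℕ | ∃ x : Fin (m + 1) → ℕ,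
        n = ∑ j, x j ∧ a 0 ≤ x 0 ∧ x 0 ≤ b 0 ∧
        ∀ j : Fin m,
          (x j.succ = 0 ∨
            ∃ y₁ ∈ Set.Icc (a j.succ) (b j.succ), ∃ y₂ ∈ Set.Icc (a j.succ) (b j.succ),
              ∃ y₃ ∈ Set.Icc (a j.succ) (b j.succ), ∃ z₁ z₂ : ℕ,
                y₁ ∣ z₁ ∧ y₂ ∣ z₂ ∧ x j.succ = z₁ + z₂ + y₃) } := by
  ext n
  simp only [Set.mem_setOf_eq]
  constructor
  · rintro ⟨x, k, hn, h0a, h0b, hj⟩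
    refine ⟨x, hn, h0a, h0b, fun j => ?_⟩
    obtain ⟨h1, h2⟩ := hj j
    rcases Nat.eq_zero_or_pos (k j) with hk | hk
    · left; rw [hk, Nat.zero_mul] at h2; omega
    · right
      obtain ⟨q, r, t, ht1, ht2, ht3⟩ :=
        lpsl_decomp (a j.succ) (b j.succ) (hab _) (k j) (x j.succ) hk h1 h2
      exact ⟨b j.succ, ⟨hab _, le_refl _⟩, a j.succ, ⟨le_refl _, hab _⟩,
        t, ⟨ht1, ht2⟩, q * b j.succ, r * a j.succ,
        Dvd.intro_left q rfl, Dvd.intro_left r rfl, ht3⟩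
  · rintro ⟨x, hn, h0a, h0b, hj⟩
    have key : ∀ j : Fin m, ∃ kj : ℕ,
        kj * a j.succ ≤ x j.succ ∧ x j.succ ≤ kj * b j.succ := by
      intro j
      rcases hj j with h0 | ⟨y₁, ⟨hy1a, hy1b⟩, y₂, ⟨hy2a, hy2b⟩, y₃, ⟨hy3a, hy3b⟩,
        z₁, z₂, ⟨p, hp⟩, ⟨q, hq⟩, hx⟩
      · exact ⟨0, by simp [h0]⟩
      · refine ⟨p + q + 1, ?_, ?_⟩
        · have l1 : p * a j.succ ≤ p * y₁ := Nat.mul_le_mul_left _ hy1a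
          have l2 : q * a j.succ ≤ q * y₂ := Nat.mul_le_mul_left _ hy2a
          have : (p + q + 1) * a j.succ = p * a j.succ + q * a j.succ + a j.succ := by
            ring
          rw [this, hx, hp, hq]
          have e1 : y₁ * p = p * y₁ := Nat.mul_comm _ _
          have e2 : y₂ * q = q * y₂ := Nat.mul_comm _ _
          omega
        · have l1 : p * y₁ ≤ p * b j.succ := Nat.mul_le_mul_left _ hy1b
          have l2 : q * y₂ ≤ q * b j.succ := Nat.mul_le_mul_left _ hy2b
          have : (p + q + 1) * b j.succ = p * b j.succ + q * b j.succ + b j.succ := by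
            ring
          rw [this, hx, hp, hq]
          have e1 : y₁ * p = p * y₁ := Nat.mul_comm _ _
          have e2 : y₂ * q = q * y₂ := Nat.mul_comm _ _
          omega
    choose k hk using key
    exact ⟨x, k, hn, h0a, h0b, hk⟩
end

section
/- Let a, b be real numbers with 0 ≤ a ≤ b. A nonnegative real number x belongs to the additive submonoid of ℝ generated by Set.Icc a b if and only if there exists a natural number k such that k*a ≤ x and x ≤ k*b. -/
namespace AddSubmonoid

variable {K : Type*} [Field K] [LinearOrder K] [IsStrictOrderedRing K]

def iUnionNatMulIcc (a b : K) : AddSubmonoid K where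
  carrier := ⋃ k : ℕ, Set.Icc (k * a) (k * b)
  zero_mem' := Set.mem_iUnion.2 ⟨0, by simp⟩
  add_mem' := by
    simp only [Set.mem_iUnion, Set.mem_Icc]
    rintro x y ⟨m, hma, hmb⟩ ⟨n, hna, hnb⟩
    exact ⟨m + n, by push_cast; linarith, by push_cast; linarith⟩

theorem closure_Icc_le_iUnionNatMulIcc (a b : K) :
    closure (Set.Icc a b) ≤ iUnionNatMulIcc a b :=
  closure_le.2 fun x hx => Set.mem_iUnion.2 ⟨1, by simpa using hx⟩

theorem Icc_natMul_subset_closure_Icc (a b : K) (k : ℕ) :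
    Set.Icc (k * a) (k * b) ⊆ closure (Set.Icc a b) := by
  rintro x ⟨hxa, hxb⟩
  rcases Nat.eq_zero_or_pos k with rfl | hk
  · simp only [Nat.cast_zero, zero_mul] at hxa hxb
    rw [le_antisymm hxb hxa]
    exact zero_mem _
  · have hk' : (0 : K) < k := Nat.cast_pos.2 hk
    -- `x` is `k` copies of the generator `x / k`.
    have hdiv : x / k ∈ Set.Icc a b :=
      ⟨(le_div_iff₀' hk').2 hxa, (div_le_iff₀' hk').2 hxb⟩
    have hsum := nsmul_mem (subset_closure hdiv) k
    rwa [nsmul_eq_mul, mul_div_cancel₀ _ hk'.ne'] at hsum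

theorem coe_closure_Icc (a b : K) :
    (closure (Set.Icc a b) : Set K) = ⋃ k : ℕ, Set.Icc (k * a) (k * b) :=
  Set.Subset.antisymm (closure_Icc_le_iUnionNatMulIcc a b)
    (Set.iUnion_subset (Icc_natMul_subset_closure_Icc a b))

end AddSubmonoid

theorem mem_addClosure_Icc_real_iff_general (a b : ℝ)
    (x : ℝ) :
    x ∈ AddSubmonoid.closure (Set.Icc a b) ↔
      ∃ k : ℕ, (k : ℝ) * a ≤ x ∧ x ≤ (k : ℝ) * b := by
  rw [← SetLike.mem_coe, AddSubmonoid.coe_closure_Icc]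
  simp only [Set.mem_iUnion, Set.mem_Icc]

theorem mem_addClosure_Icc_real_iff (a b : ℝ) (ha : 0 ≤ a) (hab : a ≤ b)
    (x : ℝ) (hx : 0 ≤ x) :
    x ∈ AddSubmonoid.closure (Set.Icc a b) ↔
      ∃ k : ℕ, (k : ℝ) * a ≤ x ∧ x ≤ (k : ℝ) * b :=
  mem_addClosure_Icc_real_iff_general a b x
end
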